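/- Set a = n − m, and let s, t be integers with s < a < t (a vertex of type 1^a). Let M be the matrix with rows (1, i, 0), (0, 1, 0), (y, z, 1), where i ∈ 𝒪/𝒫^{-s}, y ∈ 𝒫^{a+1}/𝒫^{t}, and z ∈ 𝒫/𝒫^{t-s}. Then M represents a γ-fixed point at the vertex (s,t) if and only if v(i) ≥ −s − m, v(y) ≥ t − m, and y·i·(1 − u₁/u₂) + z·(u₃/u₂ − 1) ∈ 𝒫^{t-s}. -/

import Mathlib

noncomputable section

/-- The element π of F = K((π)). -/
def pp (K : Type*) [Field K] : LaurentSeries K := HahnSeries.single (1 : ℤ) (1 : K)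

/-- The π-adic valuation on F = K((π)), with v(0) = ⊤. -/
def vv {K : Type*} [Field K] (x : LaurentSeries K) : WithTop ℤ := x.orderTop

/-- x ∈ 𝒫^r, i.e. v(x) ≥ r. -/
def inP {K : Type*} [Field K] (r : ℤ) (x : LaurentSeries K) : Prop := (r : WithTop ℤ) ≤ vv x

/-- x ∈ 𝒫^r/𝒫^{r'} : x is a polynomial x_r π^r + ⋯ + x_{r'-1} π^{r'-1} (possibly 0). -/
def inPQ {K : Type*} [Field K] (r r' : ℤ) (x : LaurentSeries K) : Prop :=
  inP r x ∧ ∀ i : ℤ, r' ≤ i → x.coeff i = 0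

/-- Membership in GL₃(𝒪): entries in 𝒪 and determinant a unit of 𝒪. -/
def inGLO {K : Type*} [Field K] (C : Matrix (Fin 3) (Fin 3) (LaurentSeries K)) : Prop :=
  (∀ i j, inP 0 (C i j)) ∧ vv C.det = 0

/-- The matrix x_{(s,t)} = diag(1, π^s, π^t). -/
def xst (K : Type*) [Field K] (s t : ℤ) : Matrix (Fin 3) (Fin 3) (LaurentSeries K) :=
  Matrix.diagonal ![1, pp K ^ s, pp K ^ t]

/-- Membership in the subgroup I^a of GL₃(F). -/
def inIa {K : Type*} [Field K] (a : ℤ) (g : Matrix (Fin 3) (Fin 3) (LaurentSeries K)) : Prop :=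
  g.det ≠ 0 ∧
  vv (g 0 0) = 0 ∧ vv (g 1 1) = 0 ∧ vv (g 2 2) = 0 ∧
  inP (-a) (g 0 1) ∧ inP (-a) (g 0 2) ∧ inP 0 (g 1 2) ∧
  inP (a + 1) (g 1 0) ∧ inP (a + 1) (g 2 0) ∧ inP 1 (g 2 1)

/-- Membership in x_{(s,t)}·GL₃(𝒪)·x_{(s,t)}⁻¹. -/
def inConj {K : Type*} [Field K] (s t : ℤ) (g : Matrix (Fin 3) (Fin 3) (LaurentSeries K)) : Prop :=
  ∃ C, inGLO C ∧ g = xst K s t * C * (xst K s t)⁻¹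

/-- M represents a γ-fixed point at the vertex (s,t): there is C ∈ GL₃(𝒪) with
γ·M·x_{(s,t)} = M·x_{(s,t)}·C. -/
def reprFixed {K : Type*} [Field K] (γ M : Matrix (Fin 3) (Fin 3) (LaurentSeries K))
    (s t : ℤ) : Prop :=
  ∃ C, inGLO C ∧ γ * (M * xst K s t) = M * xst K s t * C

/-!
Since `g = M·x_{(s,t)}` is invertible, the only candidate for `C` is `g⁻¹·γ·g`, which is computed
explicitly: its diagonal is `u₁, u₂, u₃`, and its only nonzero off-diagonal entries are `i(u₁ - u₂)π^s`, `y(u₃ - u₁)π^{-t}` and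
`(y·i·(1 - u₁/u₂) + z·(u₃/u₂ - 1))·u₂·π^{s-t}`. Its determinant `u₁u₂u₃` is a unit, so it lies in
`GL₃(𝒪)` iff these three entries are integral, and as `v(u₁ - u₂) = v(u₃ - u₁) = m` this is
exactly the stated list of conditions.
-/

open Matrix

lemma exists_mul_eq_mul_iff_of_isUnit {G : Type*} [Monoid G] {g A D : G} (hA : IsUnit A)
    (h : g * A = A * D) (P : G → Prop) : (∃ C, P C ∧ g * A = A * C) ↔ P D :=
  ⟨fun ⟨_, hC, hgC⟩ => hA.mul_left_cancel (h.symm.trans hgC) ▸ hC, fun hD => ⟨D, hD, h⟩⟩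

section LaurentSeries

variable {K : Type*} [Field K]

lemma vv_zero : vv (0 : LaurentSeries K) = ⊤ := HahnSeries.orderTop_zero

lemma vv_mul (x y : LaurentSeries K) : vv (x * y) = vv x + vv y := HahnSeries.orderTop_mul x y

lemma vv_neg (x : LaurentSeries K) : vv (-x) = vv x := HahnSeries.orderTop_neg

lemma vv_pp_zpow (r : ℤ) : vv (pp K ^ r) = r := by
  rw [pp, ← RatFunc.single_zpow]
  exact HahnSeries.orderTop_single one_ne_zero

lemma ne_zero_of_vv_eq_coe {x : LaurentSeries K} {r : ℤ} (h : vv x = r) : x ≠ 0 := by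
  rintro rfl
  exact WithTop.top_ne_coe (vv_zero.symm.trans h)

lemma pp_ne_zero : pp K ≠ 0 := by
  simpa using ne_zero_of_vv_eq_coe (vv_pp_zpow (K := K) 1)

lemma vv_sub_eq_vv_one_sub_div {u w : LaurentSeries K} (hu : vv u = 0) :
    vv (u - w) = vv (1 - w / u) := by
  have hu0 : u ≠ 0 := ne_zero_of_vv_eq_coe hu
  rw [show u - w = u * (1 - w / u) by field_simp, vv_mul, hu, zero_add]

lemma inP_mul_mul_pp_zpow_iff (x u : LaurentSeries K) {e : ℤ} (hu : vv u = e) (c d : ℤ) :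
    inP c (x * u * pp K ^ d) ↔ ((c - e - d : ℤ) : WithTop ℤ) ≤ vv x := by
  rw [inP, vv_mul, vv_mul, hu, vv_pp_zpow]
  induction vv x using WithTop.recTopCoe with
  | top => simp
  | coe k => norm_cast; omega

lemma inGLO_iff_of_vv_diag_eq_zero {a b d e f g : LaurentSeries K}
    (ha : vv a = 0) (hd : vv d = 0) (hg : vv g = 0) :
    inGLO !![a, b, 0; 0, d, 0; e, f, g] ↔ inP 0 b ∧ inP 0 e ∧ inP 0 f := by
  have hdet : vv (!![a, b, 0; 0, d, 0; e, f, g]).det = 0 := by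
    simp [det_fin_three, vv_mul, ha, hd, hg]
  simp only [inGLO, hdet, and_true, Fin.forall_fin_succ]
  simp [inP, ha, hd, hg, vv_zero]

lemma isUnit_xst (s t : ℤ) : IsUnit (xst K s t) := by
  have hπ : pp K ≠ 0 := pp_ne_zero
  simp [isUnit_iff_isUnit_det, xst, det_diagonal, Fin.prod_univ_three, zpow_ne_zero, hπ]

lemma isUnit_unipotent (i y z : LaurentSeries K) : IsUnit !![1, i, 0; 0, 1, 0; y, z, 1] := by
  simp [isUnit_iff_isUnit_det, det_fin_three]

lemma diagonal_mul_mul_xst_eq (u₁ u₂ u₃ i y z : LaurentSeries K) (hu₂ : u₂ ≠ 0) (s t : ℤ) :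
    diagonal ![u₁, u₂, u₃] * (!![1, i, 0; 0, 1, 0; y, z, 1] * xst K s t) =
      !![1, i, 0; 0, 1, 0; y, z, 1] * xst K s t *
        !![u₁, i * (u₁ - u₂) * pp K ^ s, 0;
          0, u₂, 0;
          y * (u₃ - u₁) * pp K ^ (-t),
            (y * i * (1 - u₁ / u₂) + z * (u₃ / u₂ - 1)) * u₂ * pp K ^ (s - t), u₃] := by
  have hπ : pp K ≠ 0 := pp_ne_zero
  rw [xst, diagonal_fin_three, diagonal_fin_three]
  simp only [mul_fin_three, _root_.zpow_neg, zpow_sub₀ hπ]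
  refine Matrix.ext fun j k => ?_
  fin_cases j <;> fin_cases k <;> simp <;> field_simp <;> ring

end LaurentSeries

theorem stmt14_general (K : Type*) [Field K]
    (u₁ u₂ u₃ : LaurentSeries K) (m : ℤ)
    (hu₁ : vv u₁ = 0) (hu₂ : vv u₂ = 0) (hu₃ : vv u₃ = 0)
    (hv₁₂ : vv (1 - u₁ / u₂) = (m : WithTop ℤ))
    (hv₁₃ : vv (1 - u₁ / u₃) = (m : WithTop ℤ))
    (s t : ℤ)
    (i y z : LaurentSeries K) :
    reprFixed (Matrix.diagonal ![u₁, u₂, u₃]) !![1, i, 0; 0, 1, 0; y, z, 1] s t ↔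
      (((-s - m : ℤ) : WithTop ℤ) ≤ vv i ∧ ((t - m : ℤ) : WithTop ℤ) ≤ vv y ∧
        inP (t - s) (y * i * (1 - u₁ / u₂) + z * (u₃ / u₂ - 1))) := by
  have hu₁₂ : vv (u₁ - u₂) = m := by
    rw [← neg_sub, vv_neg, vv_sub_eq_vv_one_sub_div hu₂, hv₁₂]
  have hu₃₁ : vv (u₃ - u₁) = m := by
    rw [vv_sub_eq_vv_one_sub_div hu₃, hv₁₃]
  rw [reprFixed, exists_mul_eq_mul_iff_of_isUnit ((isUnit_unipotent i y z).mul (isUnit_xst s t))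
      (diagonal_mul_mul_xst_eq u₁ u₂ u₃ i y z (ne_zero_of_vv_eq_coe hu₂) s t),
    inGLO_iff_of_vv_diag_eq_zero hu₁ hu₂ hu₃, inP_mul_mul_pp_zpow_iff _ _ hu₁₂,
    inP_mul_mul_pp_zpow_iff _ _ hu₃₁, inP_mul_mul_pp_zpow_iff (e := 0) _ _ hu₂, inP,
    show 0 - m - s = -s - m by ring, show 0 - m - -t = t - m by ring,
    show 0 - 0 - (s - t) = t - s by ring]

theorem stmt14 (K : Type*) [Field K]
    (u₁ u₂ u₃ : LaurentSeries K) (m n : ℤ)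
    (hu₁ : vv u₁ = 0) (hu₂ : vv u₂ = 0) (hu₃ : vv u₃ = 0)
    (h₁₂ : u₁ ≠ u₂) (h₁₃ : u₁ ≠ u₃) (h₂₃ : u₂ ≠ u₃)
    (hm : 0 ≤ m) (hmn : m ≤ n)
    (hv₁₂ : vv (1 - u₁ / u₂) = (m : WithTop ℤ))
    (hv₁₃ : vv (1 - u₁ / u₃) = (m : WithTop ℤ))
    (hv₂₃ : vv (1 - u₂ / u₃) = (n : WithTop ℤ))
    (a s t : ℤ) (ha : a = n - m) (hsa : s < a) (hat : a < t)
    (i y z : LaurentSeries K) (hi : inPQ 0 (-s) i) (hy : inPQ (a + 1) t y)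
    (hz : inPQ 1 (t - s) z) :
    reprFixed (Matrix.diagonal ![u₁, u₂, u₃]) !![1, i, 0; 0, 1, 0; y, z, 1] s t ↔
      (((-s - m : ℤ) : WithTop ℤ) ≤ vv i ∧ ((t - m : ℤ) : WithTop ℤ) ≤ vv y ∧
        inP (t - s) (y * i * (1 - u₁ / u₂) + z * (u₃ / u₂ - 1))) :=
  stmt14_general K u₁ u₂ u₃ m hu₁ hu₂ hu₃ hv₁₂ hv₁₃ s t i y z
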